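/- Let S be a finite alphabet, s̃ⁿ a fixed sequence, and suppose the random sequence S^{n̄} satisfies N(s|S^{n̄}) ≥ N(s|s̃ⁿ) for all s (event A). Then the random map i ↦ (Sᵢ, N(Sᵢ|Sⁱ)) restricted to indices i where N(Sᵢ|Sⁱ) ≤ N(Sᵢ|s̃ⁿ), composed with g̃⁻¹, defines a bijection between a subset of [1..n̄] of size n and [1..n]. In particular, on event A, exactly n of the n̄ channel uses are 'kept'. -/
import Mathlib


open scoped BigOperators
open Classical

/-- Number of occurrences of `s0` among `u 1, …, u m` (1-indexed sequences). -/
def cntIcc {S : Type*} [DecidableEq S] (u : ℕ → S) (m : ℕ) (s0 : S) : ℕ :=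
  ((Finset.Icc 1 m).filter fun j => u j = s0).card

section Aux
variable {S : Type*} [DecidableEq S]

lemma cntIcc_mono (u : ℕ → S) (s0 : S) {i j : ℕ} (h : i ≤ j) :
    cntIcc u i s0 ≤ cntIcc u j s0 :=
  Finset.card_le_card (Finset.filter_subset_filter _ (Finset.Icc_subset_Icc_right h))

lemma cntIcc_succ (u : ℕ → S) (s0 : S) (i : ℕ) :
    cntIcc u (i+1) s0 = cntIcc u i s0 + (if u (i+1) = s0 then 1 else 0) := by
  unfold cntIcc
  rw [← Finset.insert_Icc_right_eq_Icc_add_one (by omega : 1 ≤ i + 1), Finset.filter_insert]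
  have hnot : i + 1 ∉ (Finset.Icc 1 i).filter fun j => u j = s0 := by
    simp [Finset.mem_filter]
  split <;> simp [Finset.card_insert_of_notMem hnot, *]

lemma cntIcc_strict (u : ℕ → S) {i j : ℕ} (hij : i < j) (h : u i = u j) :
    cntIcc u i (u i) < cntIcc u j (u j) := by
  apply Finset.card_lt_card
  rw [h]
  constructor
  · exact Finset.filter_subset_filter _ (Finset.Icc_subset_Icc_right hij.le)
  · intro hsub
    have : j ∈ (Finset.Icc 1 i).filter fun k => u k = u j := by
      apply hsub
      simp [Finset.mem_filter]
      omega
    simp [Finset.mem_filter] at this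
    omega

lemma cntIcc_exists (u : ℕ → S) (s0 : S) {m N : ℕ} (h1 : 1 ≤ m)
    (h2 : m ≤ cntIcc u N s0) :
    ∃ i, 1 ≤ i ∧ i ≤ N ∧ u i = s0 ∧ cntIcc u i s0 = m := by
  have hex : ∃ i, m ≤ cntIcc u i s0 := ⟨N, h2⟩
  classical
  have hi : m ≤ cntIcc u (Nat.find hex) s0 := Nat.find_spec hex
  have hiN : Nat.find hex ≤ N := Nat.find_min' hex h2
  have hi0 : Nat.find hex ≠ 0 := by
    intro h0
    rw [h0] at hi
    have : cntIcc u 0 s0 = 0 := by simp [cntIcc]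
    omega
  obtain ⟨k, hk⟩ : ∃ k, Nat.find hex = k + 1 := ⟨Nat.find hex - 1, by omega⟩
  have hlt : cntIcc u k s0 < m := by
    have := Nat.find_min hex (by omega : k < Nat.find hex)
    omega
  have hsucc := cntIcc_succ u s0 k
  rw [hk] at hi hiN
  by_cases hcase : u (k+1) = s0
  · refine ⟨k+1, by omega, hiN, hcase, ?_⟩
    simp [hcase] at hsucc; omega
  · simp [hcase] at hsucc; omega

end Aux

/-- Let `st` be a fixed length-`n` sequence over the finite
alphabet `S`, and let the length-`n̄` sequence `s` satisfy
`N(s0|s^{n̄}) ≥ N(s0|stⁿ)` for all `s0` (event `A`).  An index `i ∈ [1..n̄]` is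
"kept" iff `N(sᵢ|sⁱ) ≤ N(sᵢ|stⁿ)`.  Then the map `i ↦ (sᵢ, N(sᵢ|sⁱ))`,
restricted to the kept indices, is a bijection onto
`{(s0, m) : 1 ≤ m ≤ N(s0|stⁿ)}` — the range of the bijection `g̃` from
`[1..n]` — so composing with `g̃⁻¹` gives a bijection between a subset of
`[1..n̄]` and `[1..n]`; in particular, on event `A` exactly `n` of the `n̄`
channel uses are kept. -/
theorem stmt_12 {S : Type*} [Fintype S] [DecidableEq S]
    (st s : ℕ → S) (n nb : ℕ) (hn : n ≤ nb)
    (hA : ∀ s0 : S, cntIcc st n s0 ≤ cntIcc s nb s0) :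
    Set.BijOn (fun i : ℕ => (s i, cntIcc s i (s i)))
      ↑((Finset.Icc 1 nb).filter
          (fun i => cntIcc s i (s i) ≤ cntIcc st n (s i)))
      {p : S × ℕ | 1 ≤ p.2 ∧ p.2 ≤ cntIcc st n p.1} ∧
    ((Finset.Icc 1 nb).filter
        (fun i => cntIcc s i (s i) ≤ cntIcc st n (s i))).card = n := by
  classical
  set f : ℕ → S × ℕ := fun i => (s i, cntIcc s i (s i)) with hf
  set F : Finset ℕ := (Finset.Icc 1 nb).filter
      (fun i => cntIcc s i (s i) ≤ cntIcc st n (s i)) with hFdef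
  have hmem : ∀ i ∈ F, 1 ≤ i ∧ i ≤ nb ∧ cntIcc s i (s i) ≤ cntIcc st n (s i) := by
    intro i hi
    simp only [hFdef, Finset.mem_filter, Finset.mem_Icc] at hi
    exact ⟨hi.1.1, hi.1.2, hi.2⟩
  have hpos : ∀ i, 1 ≤ i → 1 ≤ cntIcc s i (s i) := by
    intro i hi
    have : i ∈ (Finset.Icc 1 i).filter fun j => s j = s i := by
      simp [Finset.mem_filter, hi]
    exact Finset.card_pos.mpr ⟨i, this⟩
  have hmaps : Set.MapsTo f ↑F {p : S × ℕ | 1 ≤ p.2 ∧ p.2 ≤ cntIcc st n p.1} := by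
    intro i hi
    obtain ⟨h1, h2, h3⟩ := hmem i hi
    exact ⟨hpos i h1, h3⟩
  have hinj : Set.InjOn f ↑F := by
    intro i hi j hj heq
    obtain ⟨hi1, -, -⟩ := hmem i hi
    obtain ⟨hj1, -, -⟩ := hmem j hj
    have h1 : s i = s j := congrArg Prod.fst heq
    have h2 : cntIcc s i (s i) = cntIcc s j (s j) := congrArg Prod.snd heq
    rcases lt_trichotomy i j with h | h | h
    · exact absurd h2 (cntIcc_strict s h h1).ne
    · exact h
    · exact absurd h2.symm (cntIcc_strict s h h1.symm).ne
  have hsurj : Set.SurjOn f ↑F {p : S × ℕ | 1 ≤ p.2 ∧ p.2 ≤ cntIcc st n p.1} := by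
    rintro ⟨s0, m⟩ ⟨hm1, hm2⟩
    obtain ⟨i, hi1, hi2, hi3, hi4⟩ :=
      cntIcc_exists s s0 hm1 (hm2.trans (hA s0))
    refine ⟨i, ?_, ?_⟩
    · simp only [hFdef, Finset.coe_filter, Finset.mem_Icc, Set.mem_setOf_eq]
      refine ⟨⟨hi1, hi2⟩, ?_⟩
      rw [hi3, hi4]; exact hm2
    · simp [hf, hi3, hi4]
  refine ⟨⟨hmaps, hinj, hsurj⟩, ?_⟩
  -- cardinality
  have hcard1 : F.card = (F.image f).card := (Finset.card_image_of_injOn hinj).symm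
  set T : Finset (S × ℕ) := Finset.univ.biUnion
      (fun s0 => (Finset.Icc 1 (cntIcc st n s0)).image fun m => (s0, m)) with hT
  have hTmem : ∀ p : S × ℕ, p ∈ T ↔ (1 ≤ p.2 ∧ p.2 ≤ cntIcc st n p.1) := by
    rintro ⟨s0, m⟩
    simp only [hT, Finset.mem_biUnion, Finset.mem_univ, true_and, Finset.mem_image,
      Finset.mem_Icc, Prod.mk.injEq]
    constructor
    · rintro ⟨a, k, ⟨hk1, hk2⟩, rfl, rfl⟩; exact ⟨hk1, hk2⟩
    · rintro ⟨h1, h2⟩; exact ⟨s0, m, ⟨h1, h2⟩, rfl, rfl⟩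
  have himT : F.image f = T := by
    ext p
    rw [hTmem]
    constructor
    · rintro hp
      obtain ⟨i, hi, rfl⟩ := Finset.mem_image.mp hp
      exact hmaps hi
    · intro hp
      obtain ⟨i, hiF, hfi⟩ := hsurj hp
      exact Finset.mem_image.mpr ⟨i, hiF, hfi⟩
  have hcardT : T.card = ∑ s0 : S, cntIcc st n s0 := by
    rw [hT, Finset.card_biUnion]
    · refine Finset.sum_congr rfl fun s0 _ => ?_
      rw [Finset.card_image_of_injective _ (fun a b hab => (Prod.mk.injEq _ _ _ _ ▸ hab).2),
        Nat.card_Icc]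
      omega
    · intro a _ b _ hab
      simp only [Finset.disjoint_left, Finset.mem_image]
      rintro p ⟨k, -, rfl⟩ ⟨k', -, h⟩
      exact hab (congrArg Prod.fst h).symm
  have hsum : ∑ s0 : S, cntIcc st n s0 = n := by
    have := Finset.card_eq_sum_card_fiberwise
      (f := st) (s := Finset.Icc 1 n) (t := Finset.univ)
      (fun x _ => Finset.mem_univ _)
    simp only [Nat.card_Icc, Nat.add_sub_cancel] at this
    exact this.symm
  rw [hcard1, himT, hcardT, hsum]
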